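/- arXiv:1308.4390 — 3 statements merged into one kernel-verified Lean document; each statement's English description precedes it below -/
import Mathlib

section
/- Let g be a symmetric invertible 4×4 real matrix with det g < 0 and let W have Weyl symmetries with respect to g. Then the left dual of W equals its right dual: for all a,b,c,d in Fin 4, (1/2) Σ_{e,h} η_{ab}{}^{eh} W_{ehcd} = (1/2) Σ_{e,h} η_{cd}{}^{eh} W_{abeh}. -/
open Finset

/-- The Levi-Civita alternating symbol on `Fin 4`: the sign of `(a,b,c,d)` as a
permutation of `(0,1,2,3)`, and `0` if two indices coincide. -/
noncomputable def eps4 (a b c d : Fin 4) : ℝ :=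
  (((b : ℕ) : ℝ) - ((a : ℕ) : ℝ)) * (((c : ℕ) : ℝ) - ((a : ℕ) : ℝ)) *
    (((d : ℕ) : ℝ) - ((a : ℕ) : ℝ)) * (((c : ℕ) : ℝ) - ((b : ℕ) : ℝ)) *
    (((d : ℕ) : ℝ) - ((b : ℕ) : ℝ)) * (((d : ℕ) : ℝ) - ((c : ℕ) : ℝ)) / 12

/-- The volume element `η_{abcd} = √(−det g)·ε_{abcd}`. -/
noncomputable def eta4 (g : Fin 4 → Fin 4 → ℝ) (a b c d : Fin 4) : ℝ :=
  Real.sqrt (-(Matrix.of g).det) * eps4 a b c d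

/-!
Let `M^{mn}{}_{cd}` be `W` with its first pair raised and `D_{abcd} = ε_{abmn} M^{mn}{}_{cd}`.
The left dual is `√(-det g) D_{abcd} / 2` and, by the pair symmetry of `W`, the right dual is
`√(-det g) D_{cdab} / 2`. Now `D` is antisymmetric in both pairs, and contracting the vanishing
antisymmetrisation of `δ^t_m ε_{pqrs}` over five indices against `M`, whose traces vanish because
`W` is trace-free, gives `D` the cyclic identity in its first three indices. Exactly as for the
Riemann tensor, these symmetries force `D_{abcd} = D_{cdab}`.
-/

-- `12 • eps4`, integer-valued so that its identities can be checked by `decide`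
def eps4Int (a b c d : Fin 4) : ℤ :=
  ((b : ℤ) - a) * ((c : ℤ) - a) * ((d : ℤ) - a) * ((c : ℤ) - b) * ((d : ℤ) - b) * ((d : ℤ) - c)

lemma eps4_eq_eps4Int (a b c d : Fin 4) : eps4 a b c d = (eps4Int a b c d : ℝ) / 12 := by
  simp only [eps4, eps4Int]
  push_cast
  ring

lemma eps4_antisymm_left (a b c d : Fin 4) : eps4 a b c d = -eps4 b a c d := by
  have : ∀ a b c d : Fin 4, eps4Int a b c d = -eps4Int b a c d := by decide
  simp only [eps4_eq_eps4Int, this a b c d]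
  push_cast
  ring

lemma eps4_antisymm_mid (a b c d : Fin 4) : eps4 a b c d = -eps4 a c b d := by
  have : ∀ a b c d : Fin 4, eps4Int a b c d = -eps4Int a c b d := by decide
  simp only [eps4_eq_eps4Int, this a b c d]
  push_cast
  ring

lemma eps4_rotate (a b c d : Fin 4) : eps4 a b c d = eps4 b c a d := by
  have : ∀ a b c d : Fin 4, eps4Int a b c d = eps4Int b c a d := by decide
  simp only [eps4_eq_eps4Int, this a b c d]

-- antisymmetrising over five indices in dimension four gives zero
set_option maxRecDepth 10000 in
lemma eps4_five_index (t m p q r s : Fin 4) :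
    (if t = m then eps4 p q r s else 0)
      = (if p = m then eps4 t q r s else 0) + (if q = m then eps4 p t r s else 0)
        + (if r = m then eps4 p q t s else 0) + (if s = m then eps4 p q r t else 0) := by
  have : ∀ t m p q r s : Fin 4, (if t = m then eps4Int p q r s else 0)
      = (if p = m then eps4Int t q r s else 0) + (if q = m then eps4Int p t r s else 0)
        + (if r = m then eps4Int p q t s else 0) + (if s = m then eps4Int p q r t else 0) := by
    decide
  have h := congrArg (fun z : ℤ => (z : ℝ) / 12) (this t m p q r s)
  simp only [eps4_eq_eps4Int]
  push_cast [apply_ite (fun z : ℤ => (z : ℝ))] at h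
  simpa only [add_div, apply_ite (· / (12 : ℝ)), zero_div] using h

lemma trace_mul_eps4 (N : Fin 4 → Fin 4 → ℝ) (p q r s : Fin 4) :
    eps4 p q r s * ∑ t, N t t
      = ∑ t, (eps4 t q r s * N t p + eps4 p t r s * N t q + eps4 p q t s * N t r
        + eps4 p q r t * N t s) := by
  calc eps4 p q r s * ∑ t, N t t = ∑ t, ∑ m, (if t = m then eps4 p q r s else 0) * N t m := by
        rw [mul_sum]
        exact sum_congr rfl fun t _ => by simp
    _ = _ := by
        refine sum_congr rfl fun t _ => ?_
        simp only [eps4_five_index t, add_mul, ite_mul, zero_mul, sum_add_distrib,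
          sum_ite_eq, mem_univ, if_true]

theorem pair_comm_of_antisymm_of_cyclic {ι K : Type*} [Field K] [CharZero K]
    (T : ι → ι → ι → ι → K)
    (h1 : ∀ a b c d, T a b c d = -T b a c d)
    (h2 : ∀ a b c d, T a b c d = -T a b d c)
    (hc : ∀ a b c d, T a b c d + T b c a d + T c a b d = 0)
    (a b c d : ι) : T a b c d = T c d a b := by
  linear_combination (1/2) * h2 a b c d + (1/2) * hc a b c d - (1/2) * hc a b d c
    - (1/2) * h1 a c b d + (1/2) * h2 a c b d - (1/2) * hc a c d b
    + (1/2) * h1 a d b c - (1/2) * h2 a d b c + (1/2) * h1 a d c b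
    - (1/2) * h2 b c a d + (1/2) * hc b c d a + (1/2) * h2 b d a c
    - (1/2) * h1 b d c a - (1/2) * h2 c d a b

noncomputable def epsDual (M : Fin 4 → Fin 4 → Fin 4 → Fin 4 → ℝ) (a b c d : Fin 4) : ℝ :=
  ∑ m, ∑ n, eps4 a b m n * M m n c d

section epsDual

variable (M : Fin 4 → Fin 4 → Fin 4 → Fin 4 → ℝ)

lemma epsDual_antisymm_left (a b c d : Fin 4) : epsDual M a b c d = -epsDual M b a c d := by
  simp only [epsDual, ← sum_neg_distrib, eps4_antisymm_left a b, neg_mul]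

lemma epsDual_antisymm_right (hM : ∀ m n c d, M m n c d = -M m n d c) (a b c d : Fin 4) :
    epsDual M a b c d = -epsDual M a b d c := by
  simp only [epsDual, ← sum_neg_distrib, hM _ _ c d, mul_neg]

lemma epsDual_cyclic (htr₁ : ∀ u v, ∑ t, M t u t v = 0) (htr₂ : ∀ t v, ∑ u, M t u u v = 0)
    (a b c d : Fin 4) : epsDual M a b c d + epsDual M b c a d + epsDual M c a b d = 0 := by
  have h := calc
    0 = ∑ q, eps4 a b c q * ∑ t, M t q t d := by simp [htr₁]
    _ = ∑ q, ∑ t, (eps4 t b c q * M t q a d + eps4 a t c q * M t q b d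
          + eps4 a b t q * M t q c d + eps4 a b c t * M t q q d) :=
        sum_congr rfl fun q _ => trace_mul_eps4 (fun t m => M t q m d) a b c q
  have h₁ : ∑ q, ∑ t, eps4 t b c q * M t q a d = epsDual M b c a d := by
    rw [sum_comm]; simp only [epsDual, eps4_rotate _ b c]
  have h₂ : ∑ q, ∑ t, eps4 a t c q * M t q b d = epsDual M c a b d := by
    rw [sum_comm, epsDual_antisymm_left]
    simp only [epsDual, eps4_antisymm_mid a _ c, ← sum_neg_distrib, neg_mul]
  have h₃ : ∑ q, ∑ t, eps4 a b t q * M t q c d = epsDual M a b c d := sum_comm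
  have h₄ : ∑ q, ∑ t, eps4 a b c t * M t q q d = 0 := by
    rw [sum_comm]; simp [← mul_sum, htr₂]
  simp only [sum_add_distrib, h₁, h₂, h₃, h₄] at h
  linarith

end epsDual

section raisePair

variable {ι R : Type*} [Fintype ι] [CommSemiring R] (ginv : ι → ι → R)

def raisePair (X : ι → ι → R) (m n : ι) : R :=
  ∑ e, ∑ h, ginv e m * ginv h n * X e h

lemma sum_raise_mul_eq_sum_mul_raisePair (T X : ι → ι → R) :
    ∑ e, ∑ h, (∑ m, ∑ n, ginv e m * ginv h n * T m n) * X e h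
      = ∑ m, ∑ n, T m n * raisePair ginv X m n := by
  simp only [raisePair, sum_mul, mul_sum]
  rw [sum_comm_cycle]
  refine sum_congr rfl fun m _ => ?_
  rw [sum_comm_cycle]
  exact sum_congr rfl fun _ _ => sum_congr rfl fun _ _ => sum_congr rfl fun _ _ => by ring

lemma sum_raisePair_trace (Y : ι → ι → ι → R) (u : ι) :
    ∑ t, raisePair ginv (Y t) t u = ∑ h, ginv h u * ∑ e, ∑ t, ginv e t * Y t e h := by
  simp only [raisePair, mul_sum]
  rw [sum_comm_cycle]
  refine sum_congr rfl fun h _ => ?_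
  rw [sum_comm]
  exact sum_congr rfl fun _ _ => sum_congr rfl fun _ _ => by ring

end raisePair

lemma raisePair_antisymm {ι R : Type*} [Fintype ι] [CommRing R] (ginv : ι → ι → R)
    {X : ι → ι → R} (hX : ∀ e h, X e h = -X h e) (m n : ι) :
    raisePair ginv X m n = -raisePair ginv X n m := by
  simp only [raisePair, ← sum_neg_distrib]
  rw [sum_comm]
  exact sum_congr rfl fun _ _ => sum_congr rfl fun _ _ => by rw [hX]; ring

lemma sum_raise_eta4_mul (g ginv X : Fin 4 → Fin 4 → ℝ) (x y : Fin 4) :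
    ∑ e, ∑ h, (∑ m, ∑ n, ginv e m * ginv h n * eta4 g x y m n) * X e h
      = √(-(Matrix.of g).det) * ∑ m, ∑ n, eps4 x y m n * raisePair ginv X m n := by
  rw [sum_raise_mul_eq_sum_mul_raisePair ginv (eta4 g x y)]
  simp only [eta4, mul_assoc, mul_sum]

theorem weyl_left_dual_eq_right_dual_general
    (g ginv : Fin 4 → Fin 4 → ℝ)
    (W : Fin 4 → Fin 4 → Fin 4 → Fin 4 → ℝ)
    (hW1 : ∀ a b c d, W a b c d = - W b a c d)
    (hW2 : ∀ a b c d, W a b c d = - W a b d c)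
    (hW3 : ∀ a b c d, W a b c d = W c d a b)
    (hWtr : ∀ b d, ∑ a, ∑ c, ginv a c * W a b c d = 0)
    (a b c d : Fin 4) :
    (1 / 2) * (∑ e, ∑ h,
        (∑ m, ∑ n, ginv e m * ginv h n * eta4 g a b m n) * W e h c d)
      = (1 / 2) * (∑ e, ∑ h,
        (∑ m, ∑ n, ginv e m * ginv h n * eta4 g c d m n) * W a b e h) := by
  set M : Fin 4 → Fin 4 → Fin 4 → Fin 4 → ℝ := fun m n c d => raisePair ginv (W · · c d) m n
  have hM_right : ∀ m n c d, M m n c d = -M m n d c := by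
    intro m n c d
    simp only [M, raisePair, hW2 _ _ c d, mul_neg, sum_neg_distrib]
  have htr₁ : ∀ u v, ∑ t, M t u t v = 0 := fun u v => by
    simp [M, sum_raisePair_trace, hWtr]
  have htr₂ : ∀ t v, ∑ u, M t u u v = 0 := fun t v => by
    simp only [M, raisePair_antisymm ginv (hW1 · · _ _) t, sum_neg_distrib]
    simp [sum_raisePair_trace, hWtr]
  have hW_pair : W a b = (W · · a b) := funext₂ fun e h => hW3 a b e h
  rw [sum_raise_eta4_mul, sum_raise_eta4_mul, hW_pair]
  change _ * (_ * epsDual M a b c d) = _ * (_ * epsDual M c d a b)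
  rw [pair_comm_of_antisymm_of_cyclic (epsDual M) (epsDual_antisymm_left M)
    (epsDual_antisymm_right M hM_right) (epsDual_cyclic M htr₁ htr₂)]

/-- For a tensor with Weyl symmetries in dimension 4 the left dual equals the right dual:
`(1/2) η_{ab}{}^{eh} W_{ehcd} = (1/2) η_{cd}{}^{eh} W_{abeh}`. -/
theorem weyl_left_dual_eq_right_dual
    (g ginv : Fin 4 → Fin 4 → ℝ)
    (hg : ∀ a b, g a b = g b a)
    (hginv : ∀ a b, ∑ c, ginv a c * g c b = if a = b then (1 : ℝ) else 0)
    (hdet : (Matrix.of g).det < 0)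
    (W : Fin 4 → Fin 4 → Fin 4 → Fin 4 → ℝ)
    (hW1 : ∀ a b c d, W a b c d = - W b a c d)
    (hW2 : ∀ a b c d, W a b c d = - W a b d c)
    (hW3 : ∀ a b c d, W a b c d = W c d a b)
    (hW4 : ∀ a b c d, W a b c d + W a c d b + W a d b c = 0)
    (hWtr : ∀ b d, ∑ a, ∑ c, ginv a c * W a b c d = 0)
    (a b c d : Fin 4) :
    (1 / 2) * (∑ e, ∑ h,
        (∑ m, ∑ n, ginv e m * ginv h n * eta4 g a b m n) * W e h c d)
      = (1 / 2) * (∑ e, ∑ h,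
        (∑ m, ∑ n, ginv e m * ginv h n * eta4 g c d m n) * W a b e h) :=
  weyl_left_dual_eq_right_dual_general g ginv W hW1 hW2 hW3 hWtr a b c d
end

section
/- Let g be a symmetric invertible 4×4 real matrix with det g < 0 and let W have Weyl symmetries with respect to g. Then for all d,e,a,b,c,h in Fin 4: (1/2) g_{bc} Σ_{p,q,r} (1/2) W_{pq}{}^{de} g_{ra} η^{pqr}{}_h + δ_b{}^{e} Σ_{p,q,r} (1/2) W_{pqc}{}^{d} g_{ra} η^{pqr}{}_h + δ_c{}^{e} Σ_{p,q,r} (1/2) W_{pqb}{}^{d} g_{ra} η^{pqr}{}_h = −δ_c{}^{e} (W*)^{d}{}_{bah} − δ_b{}^{e} (W*)^{d}{}_{cah} + (1/2) g_{bc} (W*)^{de}{}_{ah}. (This is the component form of the identity expressing the 1-form Ω^{de}{}_{abc} = (1/2) g_{bc} *(W^{de}∧θ_a) + 2 δ^{e}{}_{(b} *(W_{c)}{}^{d}∧θ_a) in terms of the dual Weyl tensor, where for a 3-form with coefficients F_{pqr} the Hodge dual has components Σ_{p,q,r} F_{pqr} η^{pqr}{}_h.) -/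
open Finset

/-- `η^{pqr}{}_s`, obtained by raising the first three indices of `η` with `g^{ab}`. -/
noncomputable def etaUp3 (g ginv : Fin 4 → Fin 4 → ℝ) (p q r s : Fin 4) : ℝ :=
  ∑ a, ∑ b, ∑ c, ginv p a * ginv q b * ginv r c * eta4 g a b c s

/-- The right dual of the Weyl tensor, `(W*)_{abcd} = (1/2) η_{cd}{}^{eh} W_{abeh}`. -/
noncomputable def Wstar (g ginv : Fin 4 → Fin 4 → ℝ)
    (W : Fin 4 → Fin 4 → Fin 4 → Fin 4 → ℝ) (a b c d : Fin 4) : ℝ :=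
  (1 / 2) * ∑ e, ∑ h, (∑ m, ∑ n, ginv e m * ginv h n * eta4 g c d m n) * W a b e h

/-!
Contracting `g_{ra}` into `η^{pqr}{}_h` lowers its third index, and the pair symmetry
`η_{pqah} = η_{ahpq}` turns each of the three Hodge duals into a contraction of `W` with
`η_{ah}{}^{pq}`. By the pair symmetry of `W` the first one is `(W*)^{de}{}_{ah}`, and since
`W_{pqcm} = W_{cmpq} = -W_{mcpq}` the other two are `-(W*)^d{}_{cah}` and `-(W*)^d{}_{bah}`.
-/

theorem sum_mul_eq_ite_of_symm_of_left_inverse {ι R : Type*} [Fintype ι] [DecidableEq ι]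
    [CommRing R] {g ginv : ι → ι → R} (hg : ∀ a b, g a b = g b a)
    (hginv : ∀ a b, ∑ c, ginv a c * g c b = if a = b then (1 : R) else 0) (a b : ι) :
    ∑ r, g r a * ginv r b = if a = b then 1 else 0 := by
  have hleft : Matrix.of ginv * Matrix.of g = 1 := by
    ext x y
    simpa [Matrix.mul_apply, Matrix.one_apply] using hginv x y
  have hright : Matrix.of g * Matrix.of ginv = 1 := mul_eq_one_comm.mp hleft
  simpa [Matrix.mul_apply, Matrix.one_apply, hg a] using congrFun (congrFun hright a) b

section Fubini

variable {ι R : Type*} [Fintype ι] [CommSemiring R]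

theorem sum_sum_contract_pair_mul_comm (A E : ι → ι → R) (T : ι → ι → ι → ι → R) :
    ∑ p, ∑ q, (∑ m, ∑ n, A m n * T p q m n) * E p q
      = ∑ m, ∑ n, A m n * ∑ p, ∑ q, E p q * T p q m n := by
  simp only [sum_mul, mul_sum]
  rw [sum_comm_cycle]
  refine sum_congr rfl fun m _ => ?_
  rw [sum_comm_cycle]
  exact sum_congr rfl fun n _ => sum_congr rfl fun p _ =>
    sum_congr rfl fun q _ => by ring

theorem sum_sum_contract_mul_comm (u : ι → R) (E : ι → ι → R) (T : ι → ι → ι → R) :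
    ∑ p, ∑ q, (∑ m, u m * T p q m) * E p q
      = ∑ m, u m * ∑ p, ∑ q, E p q * T p q m := by
  simp only [sum_mul, mul_sum]
  rw [sum_comm_cycle]
  exact sum_congr rfl fun m _ => sum_congr rfl fun p _ =>
    sum_congr rfl fun q _ => by ring

end Fubini

theorem eps4_swap_pairs (a b c d : Fin 4) : eps4 a b c d = eps4 c d a b := by
  unfold eps4; ring

theorem eta4_swap_pairs (g : Fin 4 → Fin 4 → ℝ) (a b c d : Fin 4) :
    eta4 g a b c d = eta4 g c d a b := by
  rw [eta4, eta4, eps4_swap_pairs]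

/-- `η_{ab}{}^{pq}`. -/
noncomputable def etaDownUp (g ginv : Fin 4 → Fin 4 → ℝ) (a b p q : Fin 4) : ℝ :=
  ∑ m, ∑ n, ginv p m * ginv q n * eta4 g a b m n

theorem Wstar_eq_sum_etaDownUp (g ginv : Fin 4 → Fin 4 → ℝ)
    (W : Fin 4 → Fin 4 → Fin 4 → Fin 4 → ℝ) (x y a b : Fin 4) :
    Wstar g ginv W x y a b = (1 / 2) * ∑ p, ∑ q, etaDownUp g ginv a b p q * W x y p q :=
  rfl

section Hodge

variable {g ginv : Fin 4 → Fin 4 → ℝ} {W : Fin 4 → Fin 4 → Fin 4 → Fin 4 → ℝ}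

theorem sum_g_mul_etaUp3 (hg : ∀ a b, g a b = g b a)
    (hginv : ∀ a b, ∑ c, ginv a c * g c b = if a = b then (1 : ℝ) else 0) (p q a h : Fin 4) :
    ∑ r, g r a * etaUp3 g ginv p q r h = etaDownUp g ginv a h p q := by
  calc ∑ r, g r a * etaUp3 g ginv p q r h
      = ∑ m, ∑ n, ginv p m * ginv q n * ∑ c, (∑ r, g r a * ginv r c) * eta4 g m n c h := by
        simp only [etaUp3, mul_sum, sum_mul]
        rw [sum_comm]
        refine sum_congr rfl fun m _ => ?_
        rw [sum_comm]
        refine sum_congr rfl fun n _ => ?_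
        rw [sum_comm]
        exact sum_congr rfl fun c _ => sum_congr rfl fun r _ => by ring
    _ = etaDownUp g ginv a h p q := by
        simp [sum_mul_eq_ite_of_symm_of_left_inverse hg hginv, etaDownUp, eta4_swap_pairs g _ _ a h]

theorem sum_mul_g_mul_etaUp3 (hg : ∀ a b, g a b = g b a)
    (hginv : ∀ a b, ∑ c, ginv a c * g c b = if a = b then (1 : ℝ) else 0)
    (F : Fin 4 → Fin 4 → ℝ) (a h : Fin 4) :
    ∑ p, ∑ q, ∑ r, F p q * g r a * etaUp3 g ginv p q r h
      = ∑ p, ∑ q, F p q * etaDownUp g ginv a h p q := by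
  refine sum_congr rfl fun p _ => sum_congr rfl fun q _ => ?_
  rw [← sum_g_mul_etaUp3 hg hginv, mul_sum]
  exact sum_congr rfl fun r _ => by ring

theorem hodge_W_wedge_theta_eq_Wstar (hg : ∀ a b, g a b = g b a)
    (hginv : ∀ a b, ∑ c, ginv a c * g c b = if a = b then (1 : ℝ) else 0)
    (hW3 : ∀ a b c d, W a b c d = W c d a b) (u v : Fin 4 → ℝ) (a h : Fin 4) :
    ∑ p, ∑ q, ∑ r,
        (1 / 2) * (∑ m, ∑ n, u m * v n * W p q m n) * g r a * etaUp3 g ginv p q r h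
      = ∑ p, ∑ q, u p * v q * Wstar g ginv W p q a h := by
  rw [sum_mul_g_mul_etaUp3 hg hginv (fun p q => (1 / 2) * ∑ m, ∑ n, u m * v n * W p q m n)]
  calc ∑ p, ∑ q, (1 / 2) * (∑ m, ∑ n, u m * v n * W p q m n) * etaDownUp g ginv a h p q
      = ∑ p, ∑ q,
          (∑ m, ∑ n, u m * v n * W p q m n) * ((1 / 2) * etaDownUp g ginv a h p q) :=
        sum_congr rfl fun p _ => sum_congr rfl fun q _ => by ring
    _ = ∑ m, ∑ n, u m * v n * ∑ p, ∑ q, (1 / 2) * etaDownUp g ginv a h p q * W p q m n :=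
        sum_sum_contract_pair_mul_comm _ _ _
    _ = ∑ p, ∑ q, u p * v q * Wstar g ginv W p q a h := by
        simp only [Wstar_eq_sum_etaDownUp, mul_sum]
        exact sum_congr rfl fun m _ => sum_congr rfl fun n _ =>
          sum_congr rfl fun p _ => sum_congr rfl fun q _ => by rw [hW3]; ring

theorem hodge_W_index_wedge_theta_eq_neg_Wstar (hg : ∀ a b, g a b = g b a)
    (hginv : ∀ a b, ∑ c, ginv a c * g c b = if a = b then (1 : ℝ) else 0)
    (hW1 : ∀ a b c d, W a b c d = - W b a c d) (hW3 : ∀ a b c d, W a b c d = W c d a b)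
    (u : Fin 4 → ℝ) (a c h : Fin 4) :
    ∑ p, ∑ q, ∑ r, (1 / 2) * (∑ m, u m * W p q c m) * g r a * etaUp3 g ginv p q r h
      = - ∑ p, u p * Wstar g ginv W p c a h := by
  rw [sum_mul_g_mul_etaUp3 hg hginv (fun p q => (1 / 2) * ∑ m, u m * W p q c m)]
  calc ∑ p, ∑ q, (1 / 2) * (∑ m, u m * W p q c m) * etaDownUp g ginv a h p q
      = ∑ p, ∑ q, (∑ m, u m * W p q c m) * ((1 / 2) * etaDownUp g ginv a h p q) :=
        sum_congr rfl fun p _ => sum_congr rfl fun q _ => by ring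
    _ = ∑ m, u m * ∑ p, ∑ q, (1 / 2) * etaDownUp g ginv a h p q * W p q c m :=
        sum_sum_contract_mul_comm _ _ _
    _ = - ∑ p, u p * Wstar g ginv W p c a h := by
        simp only [Wstar_eq_sum_etaDownUp, mul_sum, ← sum_neg_distrib]
        exact sum_congr rfl fun m _ => sum_congr rfl fun p _ =>
          sum_congr rfl fun q _ => by rw [hW3, hW1 c]; ring

end Hodge

theorem omega_in_terms_of_dual_weyl_general
    (g ginv : Fin 4 → Fin 4 → ℝ)
    (hg : ∀ a b, g a b = g b a)
    (hginv : ∀ a b, ∑ c, ginv a c * g c b = if a = b then (1 : ℝ) else 0)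
    (W : Fin 4 → Fin 4 → Fin 4 → Fin 4 → ℝ)
    (hW1 : ∀ a b c d, W a b c d = - W b a c d)
    (hW3 : ∀ a b c d, W a b c d = W c d a b)
    (d e a b c h : Fin 4) :
    (1 / 2) * g b c *
        (∑ p, ∑ q, ∑ r,
          (1 / 2) * (∑ m, ∑ n, ginv d m * ginv e n * W p q m n) * g r a *
            etaUp3 g ginv p q r h)
      + (if b = e then (1 : ℝ) else 0) *
        (∑ p, ∑ q, ∑ r,
          (1 / 2) * (∑ m, ginv d m * W p q c m) * g r a * etaUp3 g ginv p q r h)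
      + (if c = e then (1 : ℝ) else 0) *
        (∑ p, ∑ q, ∑ r,
          (1 / 2) * (∑ m, ginv d m * W p q b m) * g r a * etaUp3 g ginv p q r h)
      = -(if c = e then (1 : ℝ) else 0) * (∑ p, ginv d p * Wstar g ginv W p b a h)
        - (if b = e then (1 : ℝ) else 0) * (∑ p, ginv d p * Wstar g ginv W p c a h)
        + (1 / 2) * g b c * (∑ p, ∑ q, ginv d p * ginv e q * Wstar g ginv W p q a h) := by
  rw [hodge_W_wedge_theta_eq_Wstar hg hginv hW3,
    hodge_W_index_wedge_theta_eq_neg_Wstar hg hginv hW1 hW3 _ a c,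
    hodge_W_index_wedge_theta_eq_neg_Wstar hg hginv hW1 hW3 _ a b]
  ring

/-- Component form of the identity expressing the 1-form
`Ω^{de}{}_{abc} = (1/2) g_{bc} *(W^{de}∧θ_a) + 2 δ^{e}{}_{(b} *(W_{c)}{}^{d}∧θ_a)`
in terms of the dual Weyl tensor. -/
theorem omega_in_terms_of_dual_weyl
    (g ginv : Fin 4 → Fin 4 → ℝ)
    (hg : ∀ a b, g a b = g b a)
    (hginv : ∀ a b, ∑ c, ginv a c * g c b = if a = b then (1 : ℝ) else 0)
    (hdet : (Matrix.of g).det < 0)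
    (W : Fin 4 → Fin 4 → Fin 4 → Fin 4 → ℝ)
    (hW1 : ∀ a b c d, W a b c d = - W b a c d)
    (hW2 : ∀ a b c d, W a b c d = - W a b d c)
    (hW3 : ∀ a b c d, W a b c d = W c d a b)
    (hW4 : ∀ a b c d, W a b c d + W a c d b + W a d b c = 0)
    (hWtr : ∀ b d, ∑ a, ∑ c, ginv a c * W a b c d = 0)
    (d e a b c h : Fin 4) :
    (1 / 2) * g b c *
        (∑ p, ∑ q, ∑ r,
          (1 / 2) * (∑ m, ∑ n, ginv d m * ginv e n * W p q m n) * g r a *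
            etaUp3 g ginv p q r h)
      + (if b = e then (1 : ℝ) else 0) *
        (∑ p, ∑ q, ∑ r,
          (1 / 2) * (∑ m, ginv d m * W p q c m) * g r a * etaUp3 g ginv p q r h)
      + (if c = e then (1 : ℝ) else 0) *
        (∑ p, ∑ q, ∑ r,
          (1 / 2) * (∑ m, ginv d m * W p q b m) * g r a * etaUp3 g ginv p q r h)
      = -(if c = e then (1 : ℝ) else 0) * (∑ p, ginv d p * Wstar g ginv W p b a h)
        - (if b = e then (1 : ℝ) else 0) * (∑ p, ginv d p * Wstar g ginv W p c a h)
        + (1 / 2) * g b c * (∑ p, ∑ q, ginv d p * ginv e q * Wstar g ginv W p q a h) :=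
  omega_in_terms_of_dual_weyl_general g ginv hg hginv W hW1 hW3 d e a b c h
end

section
/- Let g be a symmetric invertible 4×4 real matrix with det g < 0, let W have Weyl symmetries with respect to g, let S be a symmetric 4×4 real matrix, and let K_{jabc} and Ω^{de}{}_{abc,h} be defined as in the context. Then for all j,a,b,c in Fin 4: Σ_{p,q,r,d,e} (Ω^{ed}{}_{abc,p} − Ω^{de}{}_{abc,p}) S_{qe} g_{rd} η^{pqr}{}_j = K_{jabc}. (This is the component form of the identity *(𝒦_{abc}) = θ^{j} K_{jabc}, where 𝒦_{abc} = 2 Ω^{[ed]}{}_{abc}∧S_e∧θ_d and for a 3-form with coefficients F_{pqr} the Hodge dual has components Σ_{p,q,r} F_{pqr} η^{pqr}{}_j.) -/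
open Finset

/-- The components `Ω^{de}{}_{abc,h}` of the 1-form `Ω^{de}{}_{abc}`:
`Ω^{de}{}_{abc,h} = −δ_c{}^{e} (W*)^{d}{}_{bah} − δ_b{}^{e} (W*)^{d}{}_{cah}
  + (1/2) g_{bc} (W*)^{de}{}_{ah}`. -/
noncomputable def OmegaC (g ginv : Fin 4 → Fin 4 → ℝ)
    (W : Fin 4 → Fin 4 → Fin 4 → Fin 4 → ℝ) (d e a b c h : Fin 4) : ℝ :=
  -(if c = e then (1 : ℝ) else 0) * (∑ p, ginv d p * Wstar g ginv W p b a h)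
    - (if b = e then (1 : ℝ) else 0) * (∑ p, ginv d p * Wstar g ginv W p c a h)
    + (1 / 2) * g b c * (∑ p, ∑ q, ginv d p * ginv e q * Wstar g ginv W p q a h)

/-- The tensor `K_{jabc}` built from the Schouten-type tensor `S` and the Weyl-type
tensor `W`. -/
noncomputable def Ktensor (g ginv S : Fin 4 → Fin 4 → ℝ)
    (W : Fin 4 → Fin 4 → Fin 4 → Fin 4 → ℝ) (j a b c : Fin 4) : ℝ :=
  (∑ d, (∑ e, S c e * ginv e d) * W a b j d)
    + (∑ d, (∑ e, S b e * ginv e d) * W a c j d)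
    + (∑ d, (∑ e, S a e * ginv e d) * W b d c j)
    + (∑ d, (∑ e, S a e * ginv e d) * W b j c d)
    - g b c * (∑ d, ∑ e, (∑ p, ∑ q, ginv d p * ginv e q * S p q) * W a d j e)
    - 2 * g a j * (∑ d, ∑ e, (∑ p, ∑ q, ginv d p * ginv e q * S p q) * W b d c e)
    + g a c * (∑ d, ∑ e, (∑ p, ∑ q, ginv d p * ginv e q * S p q) * W b d j e)
    + g a b * (∑ d, ∑ e, (∑ p, ∑ q, ginv d p * ginv e q * S p q) * W c d j e)

/-! With `η = √(−det g) ε`, both `Ω^{ed} − Ω^{de}` (through `W*`) and `η^{pqr}{}_j` carry one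
factor `√(−det g) ε`, so the left-hand side is `−det g` times a contraction of two Levi-Civita
symbols over the single index `p`, and `√(−det g)² = −det g` because `det g < 0`. Using
`det g · ε = ε g g g g` and the ε–ε contraction identity, that product is a generalized
Kronecker delta (`genDelta`). The delta collapses the sum to three traces of the antisymmetrized
`Ω` built from `W` itself, and the trace-freeness and the symmetries of `W` reduce them to the
eight terms of `K`. -/

/-- `eps4` computed in `ℤ`, where identities over all index values can be checked by `decide`. -/
def levi4 (a b c d : Fin 4) : ℤ :=
  ((b : ℤ) - a) * ((c : ℤ) - a) * ((d : ℤ) - a) * ((c : ℤ) - b) * ((d : ℤ) - b) * ((d : ℤ) - c) / 12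

theorem eps4_eq_levi4 (a b c d : Fin 4) : eps4 a b c d = levi4 a b c d := by
  have h12 : ∀ a b c d : Fin 4, (12 : ℤ) ∣
      ((b : ℤ) - a) * ((c : ℤ) - a) * ((d : ℤ) - a) * ((c : ℤ) - b) * ((d : ℤ) - b) *
        ((d : ℤ) - c) := by
    decide
  rw [levi4, Int.cast_div (h12 a b c d) (by norm_num)]
  push_cast [eps4]
  rfl

theorem sum_levi4_mul_levi4 : ∀ a m n x y z : Fin 4,
    ∑ p, levi4 a p m n * levi4 p x y z =
      -((if a = x then 1 else 0) * ((if m = y then 1 else 0) * (if n = z then 1 else 0)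
          - (if m = z then 1 else 0) * (if n = y then 1 else 0))
        - (if a = y then 1 else 0) * ((if m = x then 1 else 0) * (if n = z then 1 else 0)
          - (if m = z then 1 else 0) * (if n = x then 1 else 0))
        + (if a = z then 1 else 0) * ((if m = x then 1 else 0) * (if n = y then 1 else 0)
          - (if m = y then 1 else 0) * (if n = x then 1 else 0))) := by
  decide

theorem sum_eps4_mul_sum_eps4 (a m n : Fin 4) (u v w : Fin 4 → ℝ) :
    ∑ p, eps4 a p m n * ∑ x, u x * ∑ y, v y * ∑ z, w z * eps4 p x y z =
      -(u a * (v m * w n - v n * w m) - v a * (u m * w n - u n * w m)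
        + w a * (u m * v n - u n * v m)) := by
  have h : ∑ p, eps4 a p m n * ∑ x, u x * ∑ y, v y * ∑ z, w z * eps4 p x y z =
      ∑ x, u x * ∑ y, v y * ∑ z, w z * ((∑ p, levi4 a p m n * levi4 p x y z : ℤ) : ℝ) := by
    simp only [Finset.mul_sum, eps4_eq_levi4, Int.cast_sum, Int.cast_mul]
    rw [Finset.sum_comm]; refine Finset.sum_congr rfl fun x _ => ?_
    rw [Finset.sum_comm]; refine Finset.sum_congr rfl fun y _ => ?_
    rw [Finset.sum_comm]; refine Finset.sum_congr rfl fun z _ => ?_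
    refine Finset.sum_congr rfl fun p _ => ?_
    ring
  rw [h]
  simp only [sum_levi4_mul_levi4]
  push_cast
  simp only [mul_ite, mul_one, mul_zero, mul_sub, neg_add_rev, neg_sub, mul_add,
    Finset.sum_add_distrib, Finset.sum_sub_distrib, Finset.sum_ite_irrel, Finset.sum_ite_eq,
    Finset.mem_univ, if_true, Finset.sum_const_zero]
  ring

theorem sum_eps4_eq_det (M : Matrix (Fin 4) (Fin 4) ℝ) :
    ∑ w, M w 0 * ∑ x, M x 1 * ∑ y, M y 2 * ∑ z, M z 3 * eps4 w x y z = M.det := by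
  rw [Matrix.det_succ_column_zero]
  simp [Fin.sum_univ_succ, Matrix.det_fin_three, Fin.succAbove, eps4]
  norm_num
  ring

theorem sum_eps4_eq_det_mul_eps4 (M : Matrix (Fin 4) (Fin 4) ℝ) (f : Fin 4 → Fin 4) :
    ∑ w, M w (f 0) * ∑ x, M x (f 1) * ∑ y, M y (f 2) * ∑ z, M z (f 3) * eps4 w x y z =
      M.det * eps4 (f 0) (f 1) (f 2) (f 3) := by
  set P : Matrix (Fin 4) (Fin 4) ℝ := Matrix.of fun i k => if i = f k then 1 else 0
  have hP : P.det = eps4 (f 0) (f 1) (f 2) (f 3) := by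
    rw [← sum_eps4_eq_det]
    simp [P, ite_mul, Finset.sum_ite_eq']
  rw [← hP, ← Matrix.det_mul, ← sum_eps4_eq_det]
  simp [P, Matrix.mul_apply, mul_ite, Finset.sum_ite_eq']

section Metric

variable {g ginv : Fin 4 → Fin 4 → ℝ}

theorem ginv_mul_g_eq_one
    (hginv : ∀ a b, ∑ c, ginv a c * g c b = if a = b then (1 : ℝ) else 0) :
    Matrix.of ginv * Matrix.of g = 1 := by
  ext a b
  simp [Matrix.mul_apply, Matrix.one_apply, hginv]

theorem sum_g_mul_ginv (hginv : ∀ a b, ∑ c, ginv a c * g c b = if a = b then (1 : ℝ) else 0)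
    (a b : Fin 4) : ∑ c, g a c * ginv c b = if a = b then (1 : ℝ) else 0 := by
  simpa [Matrix.mul_apply, Matrix.one_apply] using
    congrArg (fun M => M a b) (mul_eq_one_comm.mp (ginv_mul_g_eq_one hginv))

theorem ginv_symm (hg : ∀ a b, g a b = g b a)
    (hginv : ∀ a b, ∑ c, ginv a c * g c b = if a = b then (1 : ℝ) else 0) (a b : Fin 4) :
    ginv a b = ginv b a := by
  have h : Matrix.of ginv = (Matrix.of g)⁻¹ :=
    (Matrix.inv_eq_left_inv (ginv_mul_g_eq_one hginv)).symm
  have hgT : (Matrix.of g).transpose = Matrix.of g := by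
    ext a b
    exact hg b a
  have hT : (Matrix.of ginv).transpose = Matrix.of ginv := by
    rw [h, Matrix.transpose_nonsing_inv, hgT]
  exact congrFun (congrFun hT b) a

theorem sum_ginv_mul_sum_g_mul (hg : ∀ a b, g a b = g b a)
    (hginv : ∀ a b, ∑ c, ginv a c * g c b = if a = b then (1 : ℝ) else 0)
    (T : Fin 4 → ℝ) (p : Fin 4) : ∑ α, ginv p α * ∑ w, g w α * T w = T p := by
  have hδ : ∀ w, ∑ α, ginv p α * g w α = if p = w then 1 else 0 := fun w => by
    simpa only [hg w] using hginv p w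
  simp only [Finset.mul_sum]
  rw [Finset.sum_comm]
  simp only [← mul_assoc, ← Finset.sum_mul, hδ, ite_mul, one_mul, zero_mul, Finset.sum_ite_eq,
    Finset.mem_univ, if_true]

end Metric

noncomputable def epsUp1 (ginv : Fin 4 → Fin 4 → ℝ) (p β γ j : Fin 4) : ℝ :=
  ∑ α, ginv p α * eps4 α β γ j

noncomputable def epsUp34 (ginv : Fin 4 → Fin 4 → ℝ) (a p μ ν : Fin 4) : ℝ :=
  ∑ m, ∑ n, ginv μ m * ginv ν n * eps4 a p m n

noncomputable def genDelta (g : Fin 4 → Fin 4 → ℝ) (a j β γ μ ν : Fin 4) : ℝ :=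
  Matrix.det !![g a β, g a γ, g a j;
    if μ = β then 1 else 0, if μ = γ then 1 else 0, if μ = j then 1 else 0;
    if ν = β then 1 else 0, if ν = γ then 1 else 0, if ν = j then 1 else 0]

theorem det_mul_epsUp1 {g ginv : Fin 4 → Fin 4 → ℝ} (hg : ∀ a b, g a b = g b a)
    (hginv : ∀ a b, ∑ c, ginv a c * g c b = if a = b then (1 : ℝ) else 0) (p β γ j : Fin 4) :
    (Matrix.of g).det * epsUp1 ginv p β γ j =
      ∑ x, g x β * ∑ y, g y γ * ∑ z, g z j * eps4 p x y z := by
  calc (Matrix.of g).det * epsUp1 ginv p β γ j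
      = ∑ α, ginv p α * ((Matrix.of g).det * eps4 α β γ j) := by
        rw [epsUp1, Finset.mul_sum]
        exact Finset.sum_congr rfl fun α _ => by ring
    _ = ∑ α, ginv p α * ∑ w, g w α * ∑ x, g x β * ∑ y, g y γ * ∑ z, g z j * eps4 w x y z := by
        refine Finset.sum_congr rfl fun α _ => ?_
        exact congrArg (ginv p α * ·) (sum_eps4_eq_det_mul_eps4 (Matrix.of g) ![α, β, γ, j]).symm
    _ = _ := sum_ginv_mul_sum_g_mul hg hginv _ p

theorem neg_det_mul_sum_epsUp1_mul_epsUp34 {g ginv : Fin 4 → Fin 4 → ℝ}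
    (hg : ∀ a b, g a b = g b a)
    (hginv : ∀ a b, ∑ c, ginv a c * g c b = if a = b then (1 : ℝ) else 0) (a j β γ μ ν : Fin 4) :
    -(Matrix.of g).det * ∑ p, epsUp1 ginv p β γ j * epsUp34 ginv a p μ ν =
      genDelta g a j β γ μ ν := by
  calc -(Matrix.of g).det * ∑ p, epsUp1 ginv p β γ j * epsUp34 ginv a p μ ν
      = ∑ m, ∑ n, ginv μ m * ginv ν n *
          -∑ p, eps4 a p m n * ((Matrix.of g).det * epsUp1 ginv p β γ j) := by
        simp only [epsUp34, Fin.sum_univ_four]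
        ring
    _ = ∑ m, ∑ n, ginv μ m * ginv ν n *
          (g a β * (g m γ * g n j - g n γ * g m j) - g a γ * (g m β * g n j - g n β * g m j)
            + g a j * (g m β * g n γ - g n β * g m γ)) := by
        simp only [det_mul_epsUp1 hg hginv, sum_eps4_mul_sum_eps4, neg_neg]
    _ = g a β * ((∑ m, ginv μ m * g m γ) * (∑ n, ginv ν n * g n j)
            - (∑ m, ginv μ m * g m j) * (∑ n, ginv ν n * g n γ))
        - g a γ * ((∑ m, ginv μ m * g m β) * (∑ n, ginv ν n * g n j)
            - (∑ m, ginv μ m * g m j) * (∑ n, ginv ν n * g n β))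
        + g a j * ((∑ m, ginv μ m * g m β) * (∑ n, ginv ν n * g n γ)
            - (∑ m, ginv μ m * g m γ) * (∑ n, ginv ν n * g n β)) := by
        simp only [Fin.sum_univ_four]
        ring
    _ = genDelta g a j β γ μ ν := by
        simp [hginv, genDelta, Matrix.det_fin_three]
        split_ifs <;> ring

noncomputable def sMixed (S ginv : Fin 4 → Fin 4 → ℝ) (e β : Fin 4) : ℝ :=
  ∑ q, S e q * ginv q β

theorem Wstar_eq (g ginv : Fin 4 → Fin 4 → ℝ) (W : Fin 4 → Fin 4 → Fin 4 → Fin 4 → ℝ)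
    (σ τ a h : Fin 4) :
    Wstar g ginv W σ τ a h =
      Real.sqrt (-(Matrix.of g).det) / 2 * ∑ μ, ∑ ν, epsUp34 ginv a h μ ν * W σ τ μ ν := by
  simp only [Wstar, Finset.mul_sum]
  refine Finset.sum_congr rfl fun μ _ => Finset.sum_congr rfl fun ν _ => ?_
  simp only [eta4, epsUp34, Fin.sum_univ_four]
  ring

theorem etaUp3_eq (g ginv : Fin 4 → Fin 4 → ℝ) (p q r j : Fin 4) :
    etaUp3 g ginv p q r j =
      Real.sqrt (-(Matrix.of g).det) * ∑ β, ginv q β * ∑ γ, ginv r γ * epsUp1 ginv p β γ j := by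
  simp only [etaUp3, eta4, epsUp1, Fin.sum_univ_four]
  ring

theorem sum_sum_mul_etaUp3 {g ginv S : Fin 4 → Fin 4 → ℝ} (hg : ∀ a b, g a b = g b a)
    (hginv : ∀ a b, ∑ c, ginv a c * g c b = if a = b then (1 : ℝ) else 0)
    (hS : ∀ a b, S a b = S b a) (p j d e : Fin 4) :
    ∑ q, ∑ r, S q e * g r d * etaUp3 g ginv p q r j =
      Real.sqrt (-(Matrix.of g).det) * ∑ β, sMixed S ginv e β * epsUp1 ginv p β d j := by
  have hδ : ∀ γ, ∑ r, g r d * ginv r γ = if d = γ then 1 else 0 := fun γ => by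
    simpa only [hg _ d] using sum_g_mul_ginv hginv d γ
  calc ∑ q, ∑ r, S q e * g r d * etaUp3 g ginv p q r j
      = Real.sqrt (-(Matrix.of g).det) * ∑ β, (∑ q, S e q * ginv q β) *
          ∑ γ, (∑ r, g r d * ginv r γ) * epsUp1 ginv p β γ j := by
        simp only [etaUp3_eq, hS _ e, Fin.sum_univ_four]
        ring
    _ = _ := by
        simp only [hδ, ite_mul, one_mul, zero_mul, Finset.sum_ite_eq, Finset.mem_univ, if_true,
          sMixed]

noncomputable def omegaOf (g ginv V : Fin 4 → Fin 4 → ℝ) (d e b c : Fin 4) : ℝ :=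
  -(if c = e then (1 : ℝ) else 0) * (∑ p, ginv d p * V p b)
    - (if b = e then (1 : ℝ) else 0) * (∑ p, ginv d p * V p c)
    + (1 / 2) * g b c * (∑ p, ∑ q, ginv d p * ginv e q * V p q)

theorem OmegaC_eq_omegaOf (g ginv : Fin 4 → Fin 4 → ℝ) (W : Fin 4 → Fin 4 → Fin 4 → Fin 4 → ℝ)
    (d e a b c h : Fin 4) :
    OmegaC g ginv W d e a b c h = omegaOf g ginv (fun p q => Wstar g ginv W p q a h) d e b c :=
  rfl

theorem omegaOf_mul_sum (g ginv : Fin 4 → Fin 4 → ℝ) (k : ℝ) (Y : Fin 4 → Fin 4 → ℝ)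
    (V : Fin 4 → Fin 4 → Fin 4 → Fin 4 → ℝ) (d e b c : Fin 4) :
    omegaOf g ginv (fun p q => k * ∑ μ, ∑ ν, Y μ ν * V p q μ ν) d e b c =
      k * ∑ μ, ∑ ν, Y μ ν * omegaOf g ginv (fun p q => V p q μ ν) d e b c := by
  simp only [omegaOf, Fin.sum_univ_four]
  ring

noncomputable def weylOmega (g ginv : Fin 4 → Fin 4 → ℝ) (W : Fin 4 → Fin 4 → Fin 4 → Fin 4 → ℝ)
    (b c d e μ ν : Fin 4) : ℝ :=
  omegaOf g ginv (fun p q => W p q μ ν) e d b c - omegaOf g ginv (fun p q => W p q μ ν) d e b c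

theorem OmegaC_sub_OmegaC (g ginv : Fin 4 → Fin 4 → ℝ) (W : Fin 4 → Fin 4 → Fin 4 → Fin 4 → ℝ)
    (a b c p d e : Fin 4) :
    OmegaC g ginv W e d a b c p - OmegaC g ginv W d e a b c p =
      Real.sqrt (-(Matrix.of g).det) / 2 *
        ∑ μ, ∑ ν, epsUp34 ginv a p μ ν * weylOmega g ginv W b c d e μ ν := by
  simp only [OmegaC_eq_omegaOf, Wstar_eq, omegaOf_mul_sum, weylOmega, mul_sub,
    Finset.sum_sub_distrib]

theorem weylOmega_swap {g ginv : Fin 4 → Fin 4 → ℝ} {W : Fin 4 → Fin 4 → Fin 4 → Fin 4 → ℝ}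
    (hW2 : ∀ a b c d, W a b c d = - W a b d c) (b c d e μ ν : Fin 4) :
    weylOmega g ginv W b c d e ν μ = -weylOmega g ginv W b c d e μ ν := by
  simp only [weylOmega, omegaOf, hW2 _ _ ν μ, Finset.sum_neg_distrib, mul_neg]
  ring

theorem sum_mul_genDelta (g : Fin 4 → Fin 4 → ℝ) (F : Fin 4 → Fin 4 → Fin 4 → ℝ)
    (hF : ∀ d μ ν, F d ν μ = -F d μ ν) (a j β : Fin 4) :
    ∑ d, ∑ μ, ∑ ν, F d μ ν * genDelta g a j β d μ ν =
      2 * (g a β * ∑ d, F d d j - ∑ d, g a d * F d β j + g a j * ∑ d, F d β d) := by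
  simp [genDelta, Matrix.det_fin_three, mul_sub, mul_add, Finset.sum_add_distrib,
    Finset.sum_sub_distrib, mul_ite, Finset.sum_ite_eq']
  have h₁ : ∀ x, F x j x = -F x x j := fun x => hF x x j
  have h₂ : ∀ x, F x j β = -F x β j := fun x => hF x β j
  have h₃ : ∀ x, F x x β = -F x β x := fun x => hF x β x
  simp only [h₁, h₂, h₃, Finset.mul_sum, ← Finset.sum_sub_distrib,
    ← Finset.sum_add_distrib]
  refine Finset.sum_congr rfl fun x _ => ?_
  ring

section WeylTraces

variable {ginv : Fin 4 → Fin 4 → ℝ} {W : Fin 4 → Fin 4 → Fin 4 → Fin 4 → ℝ}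

theorem weyl_trace_13 (hGs : ∀ a b, ginv a b = ginv b a)
    (hWtr : ∀ b d, ∑ a, ∑ c, ginv a c * W a b c d = 0) (u v : Fin 4) :
    ∑ x, ∑ y, ginv x y * W y u x v = 0 := by
  rw [Finset.sum_comm, ← hWtr u v]
  simp only [hGs]

theorem weyl_trace_14 (hGs : ∀ a b, ginv a b = ginv b a)
    (hW2 : ∀ a b c d, W a b c d = - W a b d c)
    (hWtr : ∀ b d, ∑ a, ∑ c, ginv a c * W a b c d = 0) (u v : Fin 4) :
    ∑ x, ∑ y, ginv x y * W y u v x = 0 := by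
  simp only [hW2 _ u v, mul_neg, Finset.sum_neg_distrib, weyl_trace_13 hGs hWtr, neg_zero]

theorem weyl_trace_23 (hGs : ∀ a b, ginv a b = ginv b a)
    (hW1 : ∀ a b c d, W a b c d = - W b a c d)
    (hWtr : ∀ b d, ∑ a, ∑ c, ginv a c * W a b c d = 0) (u v : Fin 4) :
    ∑ x, ∑ y, ginv x y * W u y x v = 0 := by
  simp only [hW1 u, mul_neg, Finset.sum_neg_distrib, weyl_trace_13 hGs hWtr, neg_zero]

theorem weyl_trace_24 (hGs : ∀ a b, ginv a b = ginv b a)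
    (hW1 : ∀ a b c d, W a b c d = - W b a c d) (hW2 : ∀ a b c d, W a b c d = - W a b d c)
    (hWtr : ∀ b d, ∑ a, ∑ c, ginv a c * W a b c d = 0) (u v : Fin 4) :
    ∑ x, ∑ y, ginv x y * W u y v x = 0 := by
  simp only [hW1 u, mul_neg, Finset.sum_neg_distrib, weyl_trace_14 hGs hW2 hWtr, neg_zero]

end WeylTraces

section WeylOmegaTraces

variable {g ginv : Fin 4 → Fin 4 → ℝ} {W : Fin 4 → Fin 4 → Fin 4 → Fin 4 → ℝ}

theorem sum_weylOmega_diag_left (hGs : ∀ a b, ginv a b = ginv b a)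
    (hW1 : ∀ a b c d, W a b c d = - W b a c d)
    (hWtr : ∀ b d, ∑ a, ∑ c, ginv a c * W a b c d = 0) (b c e j : Fin 4) :
    ∑ d, weylOmega g ginv W b c d e d j = -∑ σ, ginv e σ * (W σ b c j + W σ c b j) := by
  have h₁ : ∀ u, ∑ d, ∑ p, ginv d p * W p u d j = 0 := fun u => weyl_trace_13 hGs hWtr u j
  have h₂ : ∑ d, ∑ p, ∑ q, ginv e p * ginv d q * W p q d j = 0 := by
    calc _ = ∑ p, ginv e p * ∑ d, ∑ q, ginv d q * W p q d j := by
          simp only [Fin.sum_univ_four]; ring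
      _ = 0 := by simp only [weyl_trace_23 hGs hW1 hWtr, mul_zero, Finset.sum_const_zero]
  have h₃ : ∑ d, ∑ p, ∑ q, ginv d p * ginv e q * W p q d j = 0 := by
    calc _ = ∑ q, ginv e q * ∑ d, ∑ p, ginv d p * W p q d j := by
          simp only [Fin.sum_univ_four]; ring
      _ = 0 := by simp only [h₁, mul_zero, Finset.sum_const_zero]
  simp only [weylOmega, omegaOf, Finset.sum_sub_distrib, Finset.sum_add_distrib, ← Finset.mul_sum,
    h₁, h₂, h₃]
  simp only [neg_mul, ite_mul, one_mul, zero_mul, Finset.sum_neg_distrib, Finset.sum_ite_eq,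
    Finset.mem_univ, if_true, mul_zero, mul_add, Finset.sum_add_distrib]
  ring

theorem sum_weylOmega_diag_right (hGs : ∀ a b, ginv a b = ginv b a)
    (hW1 : ∀ a b c d, W a b c d = - W b a c d) (hW2 : ∀ a b c d, W a b c d = - W a b d c)
    (hWtr : ∀ b d, ∑ a, ∑ c, ginv a c * W a b c d = 0) (b c e β : Fin 4) :
    ∑ d, weylOmega g ginv W b c d e β d = -∑ σ, ginv e σ * (W σ b β c + W σ c β b) := by
  have h₁ : ∀ u, ∑ d, ∑ p, ginv d p * W p u β d = 0 := fun u => weyl_trace_14 hGs hW2 hWtr u β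
  have h₂ : ∑ d, ∑ p, ∑ q, ginv e p * ginv d q * W p q β d = 0 := by
    calc _ = ∑ p, ginv e p * ∑ d, ∑ q, ginv d q * W p q β d := by
          simp only [Fin.sum_univ_four]; ring
      _ = 0 := by simp only [weyl_trace_24 hGs hW1 hW2 hWtr, mul_zero, Finset.sum_const_zero]
  have h₃ : ∑ d, ∑ p, ∑ q, ginv d p * ginv e q * W p q β d = 0 := by
    calc _ = ∑ q, ginv e q * ∑ d, ∑ p, ginv d p * W p q β d := by
          simp only [Fin.sum_univ_four]; ring
      _ = 0 := by simp only [h₁, mul_zero, Finset.sum_const_zero]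
  simp only [weylOmega, omegaOf, Finset.sum_sub_distrib, Finset.sum_add_distrib, ← Finset.mul_sum,
    h₁, h₂, h₃]
  simp only [neg_mul, ite_mul, one_mul, zero_mul, Finset.sum_neg_distrib, Finset.sum_ite_eq,
    Finset.mem_univ, if_true, mul_zero, mul_add, Finset.sum_add_distrib]
  ring

end WeylOmegaTraces

section Lowering

variable {g ginv : Fin 4 → Fin 4 → ℝ}

theorem sum_g_mul_omegaOf (hginv : ∀ a b, ∑ c, ginv a c * g c b = if a = b then (1 : ℝ) else 0)
    (V : Fin 4 → Fin 4 → ℝ) (a e b c : Fin 4) :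
    ∑ d, g a d * omegaOf g ginv V d e b c =
      -(if c = e then (1 : ℝ) else 0) * V a b - (if b = e then (1 : ℝ) else 0) * V a c
        + (1 / 2) * g b c * ∑ q, ginv e q * V a q := by
  calc ∑ d, g a d * omegaOf g ginv V d e b c
      = -(if c = e then (1 : ℝ) else 0) * ∑ p, (∑ d, g a d * ginv d p) * V p b
          - (if b = e then (1 : ℝ) else 0) * ∑ p, (∑ d, g a d * ginv d p) * V p c
          + (1 / 2) * g b c * ∑ q, ginv e q * ∑ p, (∑ d, g a d * ginv d p) * V p q := by
        simp only [omegaOf, Fin.sum_univ_four]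
        ring
    _ = _ := by
        simp only [sum_g_mul_ginv hginv, ite_mul, one_mul, zero_mul, Finset.sum_ite_eq,
          Finset.mem_univ, if_true]

theorem sum_g_mul_omegaOf_swap (hginv : ∀ a b, ∑ c, ginv a c * g c b = if a = b then (1 : ℝ) else 0)
    (V : Fin 4 → Fin 4 → ℝ) (a e b c : Fin 4) :
    ∑ d, g a d * omegaOf g ginv V e d b c =
      -g a c * ∑ p, ginv e p * V p b - g a b * ∑ p, ginv e p * V p c
        + (1 / 2) * g b c * ∑ p, ginv e p * V p a := by
  calc ∑ d, g a d * omegaOf g ginv V e d b c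
      = -(∑ d, g a d * if c = d then (1 : ℝ) else 0) * ∑ p, ginv e p * V p b
          - (∑ d, g a d * if b = d then (1 : ℝ) else 0) * ∑ p, ginv e p * V p c
          + (1 / 2) * g b c * ∑ p, ginv e p * ∑ q, (∑ d, g a d * ginv d q) * V p q := by
        simp only [omegaOf, Fin.sum_univ_four]
        ring
    _ = _ := by
        simp only [sum_g_mul_ginv hginv, ite_mul, mul_ite, one_mul, zero_mul, mul_one, mul_zero,
          Finset.sum_ite_eq, Finset.mem_univ, if_true]

end Lowering

theorem sum_g_mul_weylOmega {g ginv : Fin 4 → Fin 4 → ℝ} {W : Fin 4 → Fin 4 → Fin 4 → Fin 4 → ℝ}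
    (hginv : ∀ a b, ∑ c, ginv a c * g c b = if a = b then (1 : ℝ) else 0)
    (hW1 : ∀ a b c d, W a b c d = - W b a c d) (a b c e β j : Fin 4) :
    ∑ d, g a d * weylOmega g ginv W b c d e β j =
      -g a c * ∑ σ, ginv e σ * W σ b β j - g a b * ∑ σ, ginv e σ * W σ c β j
        + (if c = e then (1 : ℝ) else 0) * W a b β j + (if b = e then (1 : ℝ) else 0) * W a c β j
        + g b c * ∑ σ, ginv e σ * W σ a β j := by
  simp only [weylOmega, mul_sub, Finset.sum_sub_distrib, sum_g_mul_omegaOf hginv,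
    sum_g_mul_omegaOf_swap hginv, hW1 a, mul_neg, Finset.sum_neg_distrib]
  ring

noncomputable def sUpper (S ginv : Fin 4 → Fin 4 → ℝ) (d e : Fin 4) : ℝ :=
  ∑ p, ∑ q, ginv d p * ginv e q * S p q

section Contractions

variable {g ginv S : Fin 4 → Fin 4 → ℝ}

theorem sum_sMixed_mul_g (hg : ∀ a b, g a b = g b a)
    (hginv : ∀ a b, ∑ c, ginv a c * g c b = if a = b then (1 : ℝ) else 0) (e a : Fin 4) :
    ∑ β, sMixed S ginv e β * g a β = S e a := by
  calc ∑ β, sMixed S ginv e β * g a β = ∑ q, S e q * ∑ β, ginv q β * g β a := by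
        simp only [sMixed, hg a, Fin.sum_univ_four]
        ring
    _ = S e a := by
        simp only [hginv, mul_ite, mul_one, mul_zero, Finset.sum_ite_eq', Finset.mem_univ, if_true]

theorem sum_S_mul_sum_ginv_mul (hS : ∀ a b, S a b = S b a) (a : Fin 4) (T : Fin 4 → ℝ) :
    ∑ e, S e a * ∑ σ, ginv e σ * T σ = ∑ σ, sMixed S ginv a σ * T σ := by
  simp only [sMixed, hS _ a, Fin.sum_univ_four]
  ring

theorem sum_sMixed_mul_sum_ginv_mul (hGs : ∀ a b, ginv a b = ginv b a)
    (T : Fin 4 → Fin 4 → ℝ) :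
    ∑ e, ∑ β, sMixed S ginv e β * ∑ σ, ginv e σ * T σ β =
      ∑ σ, ∑ β, sUpper S ginv σ β * T σ β := by
  have h : ∀ σ β, sUpper S ginv σ β = ∑ e, sMixed S ginv e β * ginv e σ := fun σ β => by
    simp only [sMixed, sUpper, hGs σ, hGs β, Fin.sum_univ_four]
    ring
  simp only [h, Fin.sum_univ_four]
  ring

theorem sUpper_comm (hS : ∀ a b, S a b = S b a) (d e : Fin 4) :
    sUpper S ginv d e = sUpper S ginv e d := by
  rw [sUpper, Finset.sum_comm]
  simp only [sUpper, hS, mul_comm (ginv d _)]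

end Contractions

theorem Ktensor_eq (g ginv S : Fin 4 → Fin 4 → ℝ) (W : Fin 4 → Fin 4 → Fin 4 → Fin 4 → ℝ)
    (j a b c : Fin 4) :
    Ktensor g ginv S W j a b c =
      ∑ d, sMixed S ginv c d * W a b j d + ∑ d, sMixed S ginv b d * W a c j d
        + ∑ d, sMixed S ginv a d * W b d c j + ∑ d, sMixed S ginv a d * W b j c d
        - g b c * ∑ d, ∑ e, sUpper S ginv d e * W a d j e
        - 2 * g a j * ∑ d, ∑ e, sUpper S ginv d e * W b d c e
        + g a c * ∑ d, ∑ e, sUpper S ginv d e * W b d j e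
        + g a b * ∑ d, ∑ e, sUpper S ginv d e * W c d j e :=
  rfl

section WeylContractions

variable {g ginv S : Fin 4 → Fin 4 → ℝ} {W : Fin 4 → Fin 4 → Fin 4 → Fin 4 → ℝ}

theorem sum_sMixed_mul_g_mul_sum_weylOmega_diag_left (hg : ∀ a b, g a b = g b a)
    (hginv : ∀ a b, ∑ c, ginv a c * g c b = if a = b then (1 : ℝ) else 0)
    (hS : ∀ a b, S a b = S b a) (hW1 : ∀ a b c d, W a b c d = - W b a c d)
    (hW2 : ∀ a b c d, W a b c d = - W a b d c) (hW3 : ∀ a b c d, W a b c d = W c d a b)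
    (hWtr : ∀ b d, ∑ a, ∑ c, ginv a c * W a b c d = 0) (j a b c : Fin 4) :
    ∑ e, ∑ β, sMixed S ginv e β * (g a β * ∑ d, weylOmega g ginv W b c d e d j) =
      ∑ d, sMixed S ginv a d * W b d c j + ∑ d, sMixed S ginv a d * W b j c d := by
  have hGs := ginv_symm hg hginv
  have hW : ∀ σ, W σ b c j + W σ c b j = -(W b σ c j + W b j c σ) := fun σ => by
    rw [hW1 σ b, hW3 σ c, hW2 b j]
    ring
  calc ∑ e, ∑ β, sMixed S ginv e β * (g a β * ∑ d, weylOmega g ginv W b c d e d j)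
      = ∑ e, (∑ β, sMixed S ginv e β * g a β) * ∑ d, weylOmega g ginv W b c d e d j := by
        simp only [Finset.sum_mul, mul_assoc]
    _ = ∑ σ, sMixed S ginv a σ * (W b σ c j + W b j c σ) := by
        simp only [sum_sMixed_mul_g hg hginv, sum_weylOmega_diag_left hGs hW1 hWtr, mul_neg,
          Finset.sum_neg_distrib, sum_S_mul_sum_ginv_mul hS, hW, neg_neg]
    _ = _ := by
        simp only [mul_add, Finset.sum_add_distrib]

theorem sum_sMixed_mul_sum_g_mul_weylOmega (hg : ∀ a b, g a b = g b a)
    (hginv : ∀ a b, ∑ c, ginv a c * g c b = if a = b then (1 : ℝ) else 0)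
    (hW1 : ∀ a b c d, W a b c d = - W b a c d) (hW2 : ∀ a b c d, W a b c d = - W a b d c)
    (j a b c : Fin 4) :
    ∑ e, ∑ β, sMixed S ginv e β * ∑ d, g a d * weylOmega g ginv W b c d e β j =
      -(∑ d, sMixed S ginv c d * W a b j d + ∑ d, sMixed S ginv b d * W a c j d)
        + g b c * ∑ d, ∑ e, sUpper S ginv d e * W a d j e
        - g a c * ∑ d, ∑ e, sUpper S ginv d e * W b d j e
        - g a b * ∑ d, ∑ e, sUpper S ginv d e * W c d j e := by
  have hGs := ginv_symm hg hginv
  have hW : ∀ σ u β, W σ u β j = W u σ j β := fun σ u β => by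
    rw [hW1 σ u, hW2 u σ]
    ring
  calc ∑ e, ∑ β, sMixed S ginv e β * ∑ d, g a d * weylOmega g ginv W b c d e β j
      = ∑ e, ∑ β, sMixed S ginv e β * ∑ σ, ginv e σ *
            (g b c * W σ a β j - g a c * W σ b β j - g a b * W σ c β j)
          + (∑ e, ∑ β, sMixed S ginv e β * ((if c = e then (1 : ℝ) else 0) * W a b β j)
            + ∑ e, ∑ β, sMixed S ginv e β * ((if b = e then (1 : ℝ) else 0) * W a c β j)) := by
        simp only [← Finset.sum_add_distrib, sum_g_mul_weylOmega hginv hW1]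
        refine Finset.sum_congr rfl fun e _ => Finset.sum_congr rfl fun β _ => ?_
        simp only [Fin.sum_univ_four]
        ring
    _ = ∑ σ, ∑ β, sUpper S ginv σ β *
            (g b c * W a σ j β - g a c * W b σ j β - g a b * W c σ j β)
          + (∑ β, sMixed S ginv c β * W a b β j + ∑ β, sMixed S ginv b β * W a c β j) := by
        simp only [sum_sMixed_mul_sum_ginv_mul hGs, hW, ite_mul, one_mul, zero_mul, mul_ite,
          mul_zero, Finset.sum_ite_irrel, Finset.sum_const_zero, Finset.sum_ite_eq, Finset.mem_univ,
          if_true]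
    _ = _ := by
        simp only [hW2 a _ _ j, mul_sub, Finset.sum_sub_distrib, mul_left_comm (sUpper S ginv _ _),
          ← Finset.mul_sum, mul_neg, Finset.sum_neg_distrib]
        ring

theorem sum_sMixed_mul_g_mul_sum_weylOmega_diag_right (hg : ∀ a b, g a b = g b a)
    (hginv : ∀ a b, ∑ c, ginv a c * g c b = if a = b then (1 : ℝ) else 0)
    (hS : ∀ a b, S a b = S b a) (hW1 : ∀ a b c d, W a b c d = - W b a c d)
    (hW2 : ∀ a b c d, W a b c d = - W a b d c) (hW3 : ∀ a b c d, W a b c d = W c d a b)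
    (hWtr : ∀ b d, ∑ a, ∑ c, ginv a c * W a b c d = 0) (j a b c : Fin 4) :
    ∑ e, ∑ β, sMixed S ginv e β * (g a j * ∑ d, weylOmega g ginv W b c d e β d) =
      -(2 * g a j * ∑ d, ∑ e, sUpper S ginv d e * W b d c e) := by
  have hGs := ginv_symm hg hginv
  have hW : ∀ σ β, W σ b β c = W b σ c β := fun σ β => by
    rw [hW1 σ b, hW2 b σ]
    ring
  have hW' : ∀ σ β, W σ c β b = W b β c σ := fun σ β => by
    rw [hW3 σ c, hW1 β b, hW2 b β]
    ring
  calc ∑ e, ∑ β, sMixed S ginv e β * (g a j * ∑ d, weylOmega g ginv W b c d e β d)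
      = -(g a j * ∑ σ, ∑ β, sUpper S ginv σ β * (W σ b β c + W σ c β b)) := by
        simp only [mul_left_comm _ (g a j), ← Finset.mul_sum,
          sum_weylOmega_diag_right hGs hW1 hW2 hWtr, mul_neg, Finset.sum_neg_distrib,
          sum_sMixed_mul_sum_ginv_mul hGs]
    _ = _ := by
        simp only [hW, hW', mul_add, Finset.sum_add_distrib]
        rw [Finset.sum_comm (f := fun σ β => sUpper S ginv σ β * W b β c σ)]
        simp only [sUpper_comm hS _ _]
        ring

end WeylContractions

theorem sum_OmegaC_sub_OmegaC_mul_etaUp3 {g ginv S : Fin 4 → Fin 4 → ℝ}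
    {W : Fin 4 → Fin 4 → Fin 4 → Fin 4 → ℝ} (hg : ∀ a b, g a b = g b a)
    (hginv : ∀ a b, ∑ c, ginv a c * g c b = if a = b then (1 : ℝ) else 0)
    (hdet : (Matrix.of g).det < 0) (hS : ∀ a b, S a b = S b a) (j a b c : Fin 4) :
    ∑ p, ∑ q, ∑ r, ∑ d, ∑ e,
        (OmegaC g ginv W e d a b c p - OmegaC g ginv W d e a b c p) *
          S q e * g r d * etaUp3 g ginv p q r j =
      1 / 2 * ∑ e, ∑ β, sMixed S ginv e β * ∑ d, ∑ μ, ∑ ν,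
          weylOmega g ginv W b c d e μ ν * genDelta g a j β d μ ν := by
  set s := Real.sqrt (-(Matrix.of g).det)
  have hs : s * s = -(Matrix.of g).det := Real.mul_self_sqrt (by linarith)
  calc ∑ p, ∑ q, ∑ r, ∑ d, ∑ e,
        (OmegaC g ginv W e d a b c p - OmegaC g ginv W d e a b c p) *
          S q e * g r d * etaUp3 g ginv p q r j
      = ∑ p, ∑ d, ∑ e, (OmegaC g ginv W e d a b c p - OmegaC g ginv W d e a b c p) *
          ∑ q, ∑ r, S q e * g r d * etaUp3 g ginv p q r j := by
        refine Finset.sum_congr rfl fun p _ => ?_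
        simp only [Fin.sum_univ_four]
        ring
    _ = ∑ d, ∑ e, ∑ p, (s / 2 * ∑ μ, ∑ ν, epsUp34 ginv a p μ ν * weylOmega g ginv W b c d e μ ν) *
          (s * ∑ β, sMixed S ginv e β * epsUp1 ginv p β d j) := by
        simp only [OmegaC_sub_OmegaC, sum_sum_mul_etaUp3 hg hginv hS]
        rw [Finset.sum_comm_cycle, Finset.sum_comm_cycle]
    _ = ∑ d, ∑ e, 1 / 2 * ∑ β, sMixed S ginv e β * ∑ μ, ∑ ν, weylOmega g ginv W b c d e μ ν *
          (-(Matrix.of g).det * ∑ p, epsUp1 ginv p β d j * epsUp34 ginv a p μ ν) := by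
        rw [← hs]
        refine Finset.sum_congr rfl fun d _ => Finset.sum_congr rfl fun e _ => ?_
        simp only [Fin.sum_univ_four]
        ring
    _ = _ := by
        simp only [neg_det_mul_sum_epsUp1_mul_epsUp34 hg hginv, Finset.mul_sum]
        rw [Finset.sum_comm_cycle, Finset.sum_comm_cycle]

theorem sum_sMixed_mul_sum_weylOmega_mul_genDelta {g ginv S : Fin 4 → Fin 4 → ℝ}
    {W : Fin 4 → Fin 4 → Fin 4 → Fin 4 → ℝ} (hW2 : ∀ a b c d, W a b c d = - W a b d c)
    (j a b c : Fin 4) :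
    1 / 2 * ∑ e, ∑ β, sMixed S ginv e β * ∑ d, ∑ μ, ∑ ν,
        weylOmega g ginv W b c d e μ ν * genDelta g a j β d μ ν =
      ∑ e, ∑ β, sMixed S ginv e β * (g a β * ∑ d, weylOmega g ginv W b c d e d j
        - ∑ d, g a d * weylOmega g ginv W b c d e β j
        + g a j * ∑ d, weylOmega g ginv W b c d e β d) := by
  rw [Finset.mul_sum]
  refine Finset.sum_congr rfl fun e _ => ?_
  rw [Finset.mul_sum]
  refine Finset.sum_congr rfl fun β _ => ?_
  rw [sum_mul_genDelta g (fun d μ ν => weylOmega g ginv W b c d e μ ν)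
    (fun d μ ν => weylOmega_swap hW2 b c d e μ ν)]
  ring

theorem sum_sMixed_mul_weylOmega_traces_eq_Ktensor {g ginv S : Fin 4 → Fin 4 → ℝ}
    {W : Fin 4 → Fin 4 → Fin 4 → Fin 4 → ℝ} (hg : ∀ a b, g a b = g b a)
    (hginv : ∀ a b, ∑ c, ginv a c * g c b = if a = b then (1 : ℝ) else 0)
    (hS : ∀ a b, S a b = S b a) (hW1 : ∀ a b c d, W a b c d = - W b a c d)
    (hW2 : ∀ a b c d, W a b c d = - W a b d c) (hW3 : ∀ a b c d, W a b c d = W c d a b)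
    (hWtr : ∀ b d, ∑ a, ∑ c, ginv a c * W a b c d = 0) (j a b c : Fin 4) :
    ∑ e, ∑ β, sMixed S ginv e β * (g a β * ∑ d, weylOmega g ginv W b c d e d j
        - ∑ d, g a d * weylOmega g ginv W b c d e β j
        + g a j * ∑ d, weylOmega g ginv W b c d e β d) =
      Ktensor g ginv S W j a b c := by
  simp only [mul_add, mul_sub, Finset.sum_add_distrib, Finset.sum_sub_distrib,
    sum_sMixed_mul_g_mul_sum_weylOmega_diag_left hg hginv hS hW1 hW2 hW3 hWtr,
    sum_sMixed_mul_sum_g_mul_weylOmega hg hginv hW1 hW2,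
    sum_sMixed_mul_g_mul_sum_weylOmega_diag_right hg hginv hS hW1 hW2 hW3 hWtr, Ktensor_eq]
  ring

theorem dual_K_threeform_general
    (g ginv : Fin 4 → Fin 4 → ℝ)
    (hg : ∀ a b, g a b = g b a)
    (hginv : ∀ a b, ∑ c, ginv a c * g c b = if a = b then (1 : ℝ) else 0)
    (hdet : (Matrix.of g).det < 0)
    (W : Fin 4 → Fin 4 → Fin 4 → Fin 4 → ℝ)
    (hW1 : ∀ a b c d, W a b c d = - W b a c d)
    (hW2 : ∀ a b c d, W a b c d = - W a b d c)
    (hW3 : ∀ a b c d, W a b c d = W c d a b)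
    (hWtr : ∀ b d, ∑ a, ∑ c, ginv a c * W a b c d = 0)
    (S : Fin 4 → Fin 4 → ℝ)
    (hS : ∀ a b, S a b = S b a)
    (j a b c : Fin 4) :
    (∑ p, ∑ q, ∑ r, ∑ d, ∑ e,
        (OmegaC g ginv W e d a b c p - OmegaC g ginv W d e a b c p) *
          S q e * g r d * etaUp3 g ginv p q r j)
      = Ktensor g ginv S W j a b c := by
  rw [sum_OmegaC_sub_OmegaC_mul_etaUp3 hg hginv hdet hS,
    sum_sMixed_mul_sum_weylOmega_mul_genDelta hW2]
  exact sum_sMixed_mul_weylOmega_traces_eq_Ktensor hg hginv hS hW1 hW2 hW3 hWtr j a b c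

/-- Component form of the identity `*(𝒦_{abc}) = θ^{j} K_{jabc}`, where
`𝒦_{abc} = 2 Ω^{[ed]}{}_{abc}∧S_e∧θ_d`. -/
theorem dual_K_threeform
    (g ginv : Fin 4 → Fin 4 → ℝ)
    (hg : ∀ a b, g a b = g b a)
    (hginv : ∀ a b, ∑ c, ginv a c * g c b = if a = b then (1 : ℝ) else 0)
    (hdet : (Matrix.of g).det < 0)
    (W : Fin 4 → Fin 4 → Fin 4 → Fin 4 → ℝ)
    (hW1 : ∀ a b c d, W a b c d = - W b a c d)
    (hW2 : ∀ a b c d, W a b c d = - W a b d c)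
    (hW3 : ∀ a b c d, W a b c d = W c d a b)
    (hW4 : ∀ a b c d, W a b c d + W a c d b + W a d b c = 0)
    (hWtr : ∀ b d, ∑ a, ∑ c, ginv a c * W a b c d = 0)
    (S : Fin 4 → Fin 4 → ℝ)
    (hS : ∀ a b, S a b = S b a)
    (j a b c : Fin 4) :
    (∑ p, ∑ q, ∑ r, ∑ d, ∑ e,
        (OmegaC g ginv W e d a b c p - OmegaC g ginv W d e a b c p) *
          S q e * g r d * etaUp3 g ginv p q r j)
      = Ktensor g ginv S W j a b c :=
  dual_K_threeform_general g ginv hg hginv hdet W hW1 hW2 hW3 hWtr S hS j a b c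
end
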